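/- arXiv:2509.22675 — 8 statements merged into one kernel-verified Lean document; each statement's English description precedes it below -/
import Mathlib

section
/- For the continuous SIR system with constants b, c, the ratio ω(t) = x(t)/y(t) satisfies the linear ODE ω'(t) = (c - b)·ω(t), and hence ω(t) = (x₀/y₀)·exp((c-b)t). -/
open Real Set

/-- The ratio `ω = x / y` of susceptible to infected satisfies the linear ODE
`ω' = (c - b) ω`, and hence `ω t = (x 0 / y 0) * exp ((c - b) t)`. -/
theorem sir_ratio_linear_ode
    (a a' : ℝ) (ha : a < 0) (ha' : 0 < a')
    (b c : ℝ)
    (x y : ℝ → ℝ)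
    (hxpos : ∀ t ∈ Ioo a a', 0 < x t)
    (hypos : ∀ t ∈ Ioo a a', 0 < y t)
    (hx : ∀ t ∈ Ioo a a',
      HasDerivAt x (-(b * x t * y t / (x t + y t))) t)
    (hy : ∀ t ∈ Ioo a a',
      HasDerivAt y (b * x t * y t / (x t + y t) - c * y t) t) :
    ∀ t ∈ Ioo a a',
      HasDerivAt (fun s => x s / y s) ((c - b) * (x t / y t)) t ∧
      x t / y t = (x 0 / y 0) * Real.exp ((c - b) * t) := by
  have h0 : (0 : ℝ) ∈ Ioo a a' := ⟨ha, ha'⟩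
  -- derivative of the ratio
  have hω : ∀ t ∈ Ioo a a',
      HasDerivAt (fun s => x s / y s) ((c - b) * (x t / y t)) t := by
    intro t ht
    have hyne : y t ≠ 0 := (hypos t ht).ne'
    have hsne : x t + y t ≠ 0 := (add_pos (hxpos t ht) (hypos t ht)).ne'
    have := (hx t ht).fun_div (hy t ht) hyne
    refine this.congr_deriv ?_
    field_simp
    ring
  -- the auxiliary function ω * exp(-(c-b)s) has zero derivative
  have hg : ∀ t ∈ Ioo a a',
      HasDerivAt (fun s => x s / y s * Real.exp (-((c - b) * s))) 0 t := by
    intro t ht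
    have he : HasDerivAt (fun s : ℝ => Real.exp (-((c - b) * s)))
        (-(c - b) * Real.exp (-((c - b) * t))) t := by
      have h1 : HasDerivAt (fun s : ℝ => -((c - b) * s)) (-(c - b)) t := by
        simpa using ((hasDerivAt_id t).const_mul (c - b)).fun_neg
      simpa [mul_comm] using h1.exp
    have := (hω t ht).fun_mul he
    refine this.congr_deriv ?_
    ring
  have key : ∀ t ∈ Ioo a a',
      x t / y t * Real.exp (-((c - b) * t)) = x 0 / y 0 := by
    intro t ht
    set g : ℝ → ℝ := fun s => x s / y s * Real.exp (-((c - b) * s)) with hgdef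
    rcases le_or_gt 0 t with h | h
    · have hsub : Icc (0 : ℝ) t ⊆ Ioo a a' := fun s hs =>
        ⟨lt_of_lt_of_le ha hs.1, lt_of_le_of_lt hs.2 ht.2⟩
      have := constant_of_has_deriv_right_zero
        (f := g) (a := 0) (b := t)
        (fun s hs => ((hg s (hsub hs)).continuousAt).continuousWithinAt)
        (fun s hs => ((hg s (hsub ⟨hs.1, hs.2.le⟩)).hasDerivWithinAt))
        t ⟨h, le_refl t⟩
      simpa [hgdef] using this
    · have hsub : Icc t (0 : ℝ) ⊆ Ioo a a' := fun s hs =>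
        ⟨lt_of_lt_of_le ht.1 hs.1, lt_of_le_of_lt hs.2 ha'⟩
      have := constant_of_has_deriv_right_zero
        (f := g) (a := t) (b := 0)
        (fun s hs => ((hg s (hsub hs)).continuousAt).continuousWithinAt)
        (fun s hs => ((hg s (hsub ⟨hs.1, hs.2.le⟩)).hasDerivWithinAt))
        0 ⟨h.le, le_refl 0⟩
      simpa [hgdef] using this.symm
  intro t ht
  refine ⟨hω t ht, ?_⟩
  have hk := key t ht
  have hexp : Real.exp (-((c - b) * t)) * Real.exp ((c - b) * t) = 1 := by
    rw [← Real.exp_add]; simp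
  calc x t / y t = x t / y t * (Real.exp (-((c - b) * t)) * Real.exp ((c - b) * t)) := by
        rw [hexp, mul_one]
    _ = (x t / y t * Real.exp (-((c - b) * t))) * Real.exp ((c - b) * t) := by ring
    _ = (x 0 / y 0) * Real.exp ((c - b) * t) := by rw [hk]
end

section
/- The functions x(t) = x₀·exp(-κ·∫₀ᵗ b(s)/(exp(∫₀ˢ(c(τ)-b(τ))dτ) + κ) ds) and y(t) = y₀·exp(∫₀ᵗ [b(s)/(1 + κ·exp(∫₀ˢ(b(τ)-c(τ))dτ)) - c(s)] ds), with κ = y₀/x₀, satisfy the continuous SIR system x' = -b(t)xy/(x+y), y' = b(t)xy/(x+y) - c(t)y with x(0) = x₀ and y(0) = y₀. -/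
open Real

private lemma prim_hasDerivAt {f : ℝ → ℝ} (hf : Continuous f) (t : ℝ) :
    HasDerivAt (fun u => ∫ s in (0:ℝ)..u, f s) (f t) t :=
  intervalIntegral.integral_hasDerivAt_right (hf.intervalIntegrable 0 t)
    (hf.stronglyMeasurableAtFilter _ _) hf.continuousAt

private lemma prim_continuous {f : ℝ → ℝ} (hf : Continuous f) :
    Continuous (fun u => ∫ s in (0:ℝ)..u, f s) := by
  have h : Differentiable ℝ (fun u => ∫ s in (0:ℝ)..u, f s) :=
    fun t => (prim_hasDerivAt hf t).differentiableAt
  exact h.continuous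

/-- The explicit formulas solve the continuous SIR system with time-dependent
coefficients: they are differentiable, positive, satisfy the ODEs for `t ≥ 0`,
and fulfil the initial conditions. -/
theorem sir_explicit_solution_continuous
    (b c : ℝ → ℝ) (hb : Continuous b) (hc : Continuous c)
    (x₀ y₀ : ℝ) (hx₀ : 0 < x₀) (hy₀ : 0 < y₀)
    (κ : ℝ) (hκ : κ = y₀ / x₀)
    (x y : ℝ → ℝ)
    (hx : x = fun t => x₀ * Real.exp (-κ *
      ∫ s in (0:ℝ)..t, b s / (Real.exp (∫ τ in (0:ℝ)..s, (c τ - b τ)) + κ)))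
    (hy : y = fun t => y₀ * Real.exp
      (∫ s in (0:ℝ)..t, (b s / (1 + κ * Real.exp (∫ τ in (0:ℝ)..s, (b τ - c τ))) - c s))) :
    x 0 = x₀ ∧ y 0 = y₀ ∧
    ∀ t : ℝ, 0 ≤ t →
      0 < x t ∧ 0 < y t ∧
      HasDerivAt x (-(b t * x t * y t / (x t + y t))) t ∧
      HasDerivAt y (b t * x t * y t / (x t + y t) - c t * y t) t := by
  have hκ0 : 0 < κ := hκ ▸ div_pos hy₀ hx₀
  have hy₀x : y₀ = κ * x₀ := by rw [hκ]; field_simp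
  have hFc : Continuous fun u => ∫ τ in (0:ℝ)..u, (c τ - b τ) := prim_continuous (hc.sub hb)
  have hFc' : Continuous fun u => ∫ τ in (0:ℝ)..u, (b τ - c τ) := prim_continuous (hb.sub hc)
  have hneg : ∀ s : ℝ, (∫ τ in (0:ℝ)..s, (b τ - c τ)) = -∫ τ in (0:ℝ)..s, (c τ - b τ) := by
    intro s; rw [← intervalIntegral.integral_neg]; simp [neg_sub]
  have hden1 : ∀ s : ℝ, Real.exp (∫ τ in (0:ℝ)..s, (c τ - b τ)) + κ ≠ 0 := by
    intro s; positivity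
  have hden2 : ∀ s : ℝ, 1 + κ * Real.exp (∫ τ in (0:ℝ)..s, (b τ - c τ)) ≠ 0 := by
    intro s; positivity
  have hg1c : Continuous fun s => b s / (Real.exp (∫ τ in (0:ℝ)..s, (c τ - b τ)) + κ) :=
    hb.div ((Real.continuous_exp.comp hFc).add continuous_const) hden1
  have hg2c : Continuous fun s =>
      b s / (1 + κ * Real.exp (∫ τ in (0:ℝ)..s, (b τ - c τ))) - c s :=
    (hb.div (continuous_const.add (continuous_const.mul (Real.continuous_exp.comp hFc'))) hden2).sub hc
  have key : ∀ t : ℝ,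
      (∫ s in (0:ℝ)..t, (b s / (1 + κ * Real.exp (∫ τ in (0:ℝ)..s, (b τ - c τ))) - c s))
        + κ * ∫ s in (0:ℝ)..t, b s / (Real.exp (∫ τ in (0:ℝ)..s, (c τ - b τ)) + κ)
        = -∫ τ in (0:ℝ)..t, (c τ - b τ) := by
    intro t
    have h1 : IntervalIntegrable
        (fun s => b s / (1 + κ * Real.exp (∫ τ in (0:ℝ)..s, (b τ - c τ))) - c s)
        MeasureTheory.volume 0 t := hg2c.intervalIntegrable 0 t
    have h2 : IntervalIntegrable
        (fun s => κ * (b s / (Real.exp (∫ τ in (0:ℝ)..s, (c τ - b τ)) + κ))) MeasureTheory.volume 0 t :=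
      (hg1c.intervalIntegrable 0 t).const_mul κ
    have h3 : IntervalIntegrable (fun s => c s - b s) MeasureTheory.volume 0 t :=
      (hc.sub hb).intervalIntegrable 0 t
    have hzero : ∀ s : ℝ, (b s / (1 + κ * Real.exp (∫ τ in (0:ℝ)..s, (b τ - c τ))) - c s)
        + κ * (b s / (Real.exp (∫ τ in (0:ℝ)..s, (c τ - b τ)) + κ)) + (c s - b s) = 0 := by
      intro s
      rw [hneg s, Real.exp_neg]
      have hE : (0:ℝ) < Real.exp (∫ τ in (0:ℝ)..s, (c τ - b τ)) := Real.exp_pos _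
      have h4 : Real.exp (∫ τ in (0:ℝ)..s, (c τ - b τ)) + κ ≠ 0 := hden1 s
      have h5 : 1 + κ * (Real.exp (∫ τ in (0:ℝ)..s, (c τ - b τ)))⁻¹ ≠ 0 := by positivity
      field_simp
      ring
    have hsum : (∫ s in (0:ℝ)..t,
        ((b s / (1 + κ * Real.exp (∫ τ in (0:ℝ)..s, (b τ - c τ))) - c s)
          + κ * (b s / (Real.exp (∫ τ in (0:ℝ)..s, (c τ - b τ)) + κ)) + (c s - b s))) = 0 := by
      simp [hzero]
    rw [intervalIntegral.integral_add (h1.add h2) h3, intervalIntegral.integral_add h1 h2,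
      intervalIntegral.integral_const_mul] at hsum
    linarith
  have hyx : ∀ u : ℝ, y u = κ * Real.exp (-∫ τ in (0:ℝ)..u, (c τ - b τ)) * x u := by
    intro u
    rw [hx, hy, hy₀x]
    simp only
    have hG : (∫ s in (0:ℝ)..u, (b s / (1 + κ * Real.exp (∫ τ in (0:ℝ)..s, (b τ - c τ))) - c s))
        = (-∫ τ in (0:ℝ)..u, (c τ - b τ)) +
          (-κ * ∫ s in (0:ℝ)..u, b s / (Real.exp (∫ τ in (0:ℝ)..s, (c τ - b τ)) + κ)) := by
      linarith [key u]
    rw [hG, Real.exp_add]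
    ring
  refine ⟨by simp [hx], by simp [hy], fun t ht => ?_⟩
  have hxt : 0 < x t := by rw [hx]; positivity
  have hyt : 0 < y t := by rw [hy]; positivity
  have hE : (0:ℝ) < Real.exp (∫ τ in (0:ℝ)..t, (c τ - b τ)) := Real.exp_pos _
  have hxd : HasDerivAt x
      (x t * (-κ * (b t / (Real.exp (∫ τ in (0:ℝ)..t, (c τ - b τ)) + κ)))) t := by
    have hH := prim_hasDerivAt hg1c t
    have hd := ((hH.const_mul (-κ)).exp).const_mul x₀
    simp only [hx]
    refine hd.congr_deriv ?_
    ring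
  have hyd : HasDerivAt y
      (y t * (b t / (1 + κ * Real.exp (∫ τ in (0:ℝ)..t, (b τ - c τ))) - c t)) t := by
    have hG := prim_hasDerivAt hg2c t
    have hd := hG.exp.const_mul y₀
    simp only [hy]
    refine hd.congr_deriv ?_
    ring
  refine ⟨hxt, hyt, ?_, ?_⟩
  · convert hxd using 1
    rw [hyx t, Real.exp_neg]
    have h4 : Real.exp (∫ τ in (0:ℝ)..t, (c τ - b τ)) + κ ≠ 0 := hden1 t
    have h5 : x t + κ * (Real.exp (∫ τ in (0:ℝ)..t, (c τ - b τ)))⁻¹ * x t ≠ 0 := by positivity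
    field_simp
  · convert hyd using 1
    rw [hneg t, Real.exp_neg, hyx t, Real.exp_neg]
    have h5 : x t + κ * (Real.exp (∫ τ in (0:ℝ)..t, (c τ - b τ)))⁻¹ * x t ≠ 0 := by positivity
    have h6 : 1 + κ * (Real.exp (∫ τ in (0:ℝ)..t, (c τ - b τ)))⁻¹ ≠ 0 := by positivity
    field_simp
end

section
/- Consider the implicit discrete SIR recurrence with step h > 0: x_{n+1} = x_n - h·b·x_{n+1}·y_n/(x_n + y_n), y_{n+1} = y_n + h·(b·x_{n+1}·y_n/(x_n + y_n) - c·y_{n+1}). If x₀, y₀ > 0 and b, c ≥ 0, then x_n > 0 and y_n > 0 for all n. -/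
/-- Positivity of the implicit discrete SIR scheme: with step `h > 0`,
rates `b, c ≥ 0` and positive initial data, both sequences stay positive. -/
theorem sir_implicit_discrete_positive
    (h b c : ℝ) (hh : 0 < h) (hb : 0 ≤ b) (hc : 0 ≤ c)
    (x y : ℕ → ℝ) (hx0 : 0 < x 0) (hy0 : 0 < y 0)
    (hx : ∀ n, x (n + 1) * (1 + h * b * y n / (x n + y n)) = x n)
    (hy : ∀ n, y (n + 1) * (1 + h * c) =
      y n + h * b * x (n + 1) * y n / (x n + y n)) :
    ∀ n, 0 < x n ∧ 0 < y n := by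
  intro n
  induction n with
  | zero => exact ⟨hx0, hy0⟩
  | succ n ih =>
    obtain ⟨hxn, hyn⟩ := ih
    have hsum : 0 < x n + y n := by linarith
    have hfac : (0:ℝ) < 1 + h * b * y n / (x n + y n) := by
      have : 0 ≤ h * b * y n / (x n + y n) :=
        div_nonneg (by positivity) hsum.le
      linarith
    have hx1 : 0 < x (n + 1) := by
      have := hx n
      nlinarith [mul_pos hfac hxn]
    have hy1 : 0 < y (n + 1) := by
      have hrhs : 0 < y n + h * b * x (n + 1) * y n / (x n + y n) := by
        have : 0 ≤ h * b * x (n + 1) * y n / (x n + y n) :=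
          div_nonneg (by positivity) hsum.le
        linarith
      have hd : (0:ℝ) < 1 + h * c := by positivity
      have := hy n
      nlinarith
    exact ⟨hx1, hy1⟩
end

section
/- Let ξ = (1+ch)/(1+bh) with b, c ≥ 0 and h > 0. The sequences x_n = x₀·∏_{i=0}^{n-1} (ξⁱ + κ)/(ξⁱ + κ + b·κ·h) and y_n = (y₀/ξⁿ)·∏_{i=0}^{n-1} (ξⁱ + κ)/(ξⁱ + κ + b·κ·h), with κ = y₀/x₀, satisfy the implicit discrete SIR recurrences x_{n+1} = x_n - h·b·x_{n+1}·y_n/(x_n+y_n) and y_{n+1} = y_n + h·(b·x_{n+1}·y_n/(x_n+y_n) - c·y_{n+1}). -/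
open Finset

/-- The explicit product formulas solve the implicit discrete SIR recurrences. -/
theorem sir_discrete_explicit_solution
    (h b c : ℝ) (hh : 0 < h) (hb : 0 ≤ b) (hc : 0 ≤ c)
    (x₀ y₀ : ℝ) (hx₀ : 0 < x₀) (hy₀ : 0 < y₀)
    (κ ξ : ℝ) (hκ : κ = y₀ / x₀) (hξ : ξ = (1 + c * h) / (1 + b * h))
    (x y : ℕ → ℝ)
    (hx : ∀ n, x n = x₀ * ∏ i ∈ range n, (ξ ^ i + κ) / (ξ ^ i + κ + b * κ * h))
    (hy : ∀ n, y n = (y₀ / ξ ^ n) *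
      ∏ i ∈ range n, (ξ ^ i + κ) / (ξ ^ i + κ + b * κ * h)) :
    ∀ n, x (n + 1) = x n - h * b * x (n + 1) * y n / (x n + y n) ∧
      y (n + 1) = y n + h * (b * x (n + 1) * y n / (x n + y n) - c * y (n + 1)) := by
  intro n
  have hbh : (0:ℝ) < 1 + b*h := by nlinarith
  have hch : (0:ℝ) < 1 + c*h := by nlinarith
  have hξ0 : 0 < ξ := by rw [hξ]; positivity
  have hκ0 : 0 < κ := by rw [hκ]; positivity
  have hA : 0 < ξ^n + κ := by positivity
  have hD : 0 < ξ^n + κ + b*κ*h := by positivity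
  have hP : 0 < ∏ i ∈ range n, (ξ ^ i + κ) / (ξ ^ i + κ + b * κ * h) := by
    apply prod_pos; intro i _
    have h1 : 0 < ξ^i + κ := by positivity
    have h2 : 0 < ξ^i + κ + b*κ*h := by positivity
    positivity
  have hrel : ξ * (1 + b*h) = 1 + c*h := by
    rw [hξ]; field_simp
  have hy₀' : y₀ = κ * x₀ := by rw [hκ]; field_simp
  set P := ∏ i ∈ range n, (ξ ^ i + κ) / (ξ ^ i + κ + b * κ * h) with hPdef
  have hxn : x n = x₀ * P := hx n
  have hyn : y n = (y₀ / ξ ^ n) * P := hy n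
  have hxn1 : x (n+1) = x₀ * (P * ((ξ ^ n + κ) / (ξ ^ n + κ + b * κ * h))) := by
    rw [hx, prod_range_succ]
  have hyn1 : y (n+1) = (y₀ / ξ ^ (n+1)) * (P * ((ξ ^ n + κ) / (ξ ^ n + κ + b * κ * h))) := by
    rw [hy, prod_range_succ]
  have hxyne : x₀ * P + (y₀ / ξ ^ n) * P ≠ 0 := by
    have : 0 < ξ^n := by positivity
    positivity
  constructor
  · rw [hxn1, hxn, hyn, hy₀']
    rw [hy₀'] at hxyne
    field_simp at hxyne ⊢
    ring
  · have hc' : c = (ξ * (1 + b * h) - 1) / h := by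
      rw [eq_div_iff hh.ne']; linarith [hrel]
    rw [hyn1, hxn1, hxn, hyn, hy₀', hc']
    rw [hy₀'] at hxyne
    field_simp at hxyne ⊢
    ring
end

section
/- In the discrete SIR scheme with step h > 0, the ratio ω_n = x_n/y_n satisfies ω_{n+1} = ((1+ch)/(1+bh))·ω_n, and hence ω_n = ξⁿ·ω₀ with ξ = (1+ch)/(1+bh). -/
/-- The ratio `ω n = x n / y n` in the discrete SIR scheme satisfies
`ω (n+1) = ((1 + c h)/(1 + b h)) ω n`, hence `ω n = ξ ^ n * ω 0`. -/
theorem sir_discrete_ratio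
    (h b c : ℝ) (hh : 0 < h) (hb : 0 ≤ b) (hc : 0 ≤ c)
    (x y : ℕ → ℝ)
    (hxpos : ∀ n, 0 < x n) (hypos : ∀ n, 0 < y n)
    (hx : ∀ n, x (n + 1) = x n - h * b * x (n + 1) * y n / (x n + y n))
    (hy : ∀ n, y (n + 1) =
      y n + h * (b * x (n + 1) * y n / (x n + y n) - c * y (n + 1))) :
    ∀ n, x (n + 1) / y (n + 1) = ((1 + c * h) / (1 + b * h)) * (x n / y n) ∧
      x n / y n = ((1 + c * h) / (1 + b * h)) ^ n * (x 0 / y 0) := by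
  have step : ∀ n, x (n + 1) / y (n + 1) = ((1 + c * h) / (1 + b * h)) * (x n / y n) := by
    intro n
    have hS : (0:ℝ) < x n + y n := add_pos (hxpos n) (hypos n)
    have hSne : x n + y n ≠ 0 := ne_of_gt hS
    have A := hx n
    have B := hy n
    field_simp at A B
    have key2 : (x (n+1) * y n * (1 + b * h)) * (x n + y n)
        = ((1 + c * h) * x n * y (n+1)) * (x n + y n) := by
      linear_combination (y n) * A - (x n) * B
    have key : x (n+1) * y n * (1 + b * h) = (1 + c * h) * x n * y (n+1) :=
      mul_right_cancel₀ hSne key2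
    have hbh : (0:ℝ) < 1 + b * h := by positivity
    have hy1 := hypos (n+1)
    have hyn := hypos n
    field_simp
    linear_combination key
  intro n
  refine ⟨step n, ?_⟩
  induction n with
  | zero => simp
  | succ k ih => rw [step k, ih, pow_succ]; ring
end

section
/- For the discrete SIR scheme with constants 0 ≤ b < c (so ξ > 1), the infected population y_n = (y₀/ξⁿ)·∏_{i=0}^{n-1}(ξⁱ+κ)/(ξⁱ+κ+bκh) converges to 0 as n → ∞, while x_n converges to a strictly positive limit α. -/
open Finset Filter

/-- Disease-free convergence for the discrete SIR scheme when `0 ≤ b < c`: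
`y n → 0` while `x n` converges to a strictly positive limit `α` (equivalently,
the infinite product converges to a positive limit). -/
theorem sir_discrete_disease_free
    (h b c : ℝ) (hh : 0 < h) (hb : 0 ≤ b) (hbc : b < c)
    (x₀ y₀ : ℝ) (hx₀ : 0 < x₀) (hy₀ : 0 < y₀)
    (κ ξ : ℝ) (hκ : κ = y₀ / x₀) (hξ : ξ = (1 + c * h) / (1 + b * h))
    (x y : ℕ → ℝ)
    (hx : ∀ n, x n = x₀ * ∏ i ∈ range n, (ξ ^ i + κ) / (ξ ^ i + κ + b * κ * h))
    (hy : ∀ n, y n = (y₀ / ξ ^ n) * (x n / x₀)) :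
    Tendsto y atTop (nhds 0) ∧ ∃ α : ℝ, 0 < α ∧ Tendsto x atTop (nhds α) := by
  have hκ0 : 0 < κ := by rw [hκ]; positivity
  have hbh : (0:ℝ) < 1 + b * h := by nlinarith
  have hξ1 : 1 < ξ := by
    rw [hξ, lt_div_iff₀ hbh]; nlinarith
  have hξ0 : 0 < ξ := lt_trans one_pos hξ1
  set f : ℕ → ℝ := fun i => (ξ ^ i + κ) / (ξ ^ i + κ + b * κ * h) with hf
  have hpow : ∀ i : ℕ, (0:ℝ) < ξ ^ i + κ := fun i => by positivity
  have hbkh : (0:ℝ) ≤ b * κ * h := by positivity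
  have hden : ∀ i : ℕ, (0:ℝ) < ξ ^ i + κ + b * κ * h := fun i => by
    linarith [hpow i]
  have hfpos : ∀ i, 0 < f i := fun i => div_pos (hpow i) (hden i)
  have hfle1 : ∀ i, f i ≤ 1 := fun i => by
    rw [hf]
    apply div_le_one_of_le₀ _ (le_of_lt (hden i))
    linarith
  -- bound on -log (f i)
  have hbound : ∀ i, -Real.log (f i) ≤ b * κ * h * (ξ⁻¹) ^ i := by
    intro i
    have h1 : -Real.log (f i) = Real.log ((ξ ^ i + κ + b * κ * h) / (ξ ^ i + κ)) := by
      rw [hf, ← Real.log_inv, inv_div]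
    rw [h1]
    have h2 : Real.log ((ξ ^ i + κ + b * κ * h) / (ξ ^ i + κ)) ≤
        (ξ ^ i + κ + b * κ * h) / (ξ ^ i + κ) - 1 :=
      Real.log_le_sub_one_of_pos (div_pos (hden i) (hpow i))
    have h3 : (ξ ^ i + κ + b * κ * h) / (ξ ^ i + κ) - 1 = b * κ * h / (ξ ^ i + κ) := by
      field_simp
      ring
    have h4 : b * κ * h / (ξ ^ i + κ) ≤ b * κ * h / ξ ^ i := by
      gcongr
      linarith
    calc Real.log ((ξ ^ i + κ + b * κ * h) / (ξ ^ i + κ))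
        ≤ b * κ * h / (ξ ^ i + κ) := by rw [← h3]; exact h2
      _ ≤ b * κ * h / ξ ^ i := h4
      _ = b * κ * h * (ξ⁻¹) ^ i := by rw [inv_pow]; ring
  have hnonneg : ∀ i, 0 ≤ -Real.log (f i) := fun i => by
    simp only [neg_nonneg]
    exact Real.log_nonpos (le_of_lt (hfpos i)) (hfle1 i)
  have hgeom : Summable (fun i : ℕ => b * κ * h * (ξ⁻¹) ^ i) := by
    apply Summable.mul_left
    apply summable_geometric_of_lt_one (by positivity)
    rw [inv_lt_one_iff₀]; right; exact hξ1
  have hsum : Summable (fun i => Real.log (f i)) := by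
    have : Summable (fun i => -Real.log (f i)) :=
      Summable.of_nonneg_of_le hnonneg hbound hgeom
    simpa using this.neg
  set S := ∑' i, Real.log (f i) with hS
  have hpsum : Tendsto (fun n => ∑ i ∈ range n, Real.log (f i)) atTop (nhds S) :=
    hsum.hasSum.tendsto_sum_nat
  have hxeq : ∀ n, x n = x₀ * Real.exp (∑ i ∈ range n, Real.log (f i)) := by
    intro n
    rw [hx n, Real.exp_sum]
    congr 1
    exact (Finset.prod_congr rfl fun i _ => (Real.exp_log (hfpos i)).symm)
  have hxlim : Tendsto x atTop (nhds (x₀ * Real.exp S)) := by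
    have := (Real.continuous_exp.continuousAt.tendsto.comp hpsum).const_mul x₀
    exact this.congr fun n => (hxeq n).symm
  refine ⟨?_, x₀ * Real.exp S, by positivity, hxlim⟩
  have hy0lim : Tendsto (fun n : ℕ => y₀ / ξ ^ n) atTop (nhds 0) := by
    have := (tendsto_pow_atTop_nhds_zero_of_lt_one (r := ξ⁻¹) (by positivity)
      (by rw [inv_lt_one_iff₀]; right; exact hξ1)).const_mul y₀
    rw [mul_zero] at this
    refine this.congr fun n => ?_
    rw [inv_pow]; ring
  have hlim : Tendsto y atTop (nhds (0 * (x₀ * Real.exp S / x₀))) :=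
    (hy0lim.mul (hxlim.div_const x₀)).congr fun n => (hy n).symm
  simpa using hlim
end

section
/- In the continuous SIR system with constants b, c > 0 and R₀ = b/c < 1, the infected population y(t) = y₀·exp(∫₀ᵗ [b/(1 + κ·e^{(b-c)s}) - c] ds) converges to 0 as t → ∞, and x(t) converges to a strictly positive limit. -/
open Real Filter

/-- Disease-free convergence for the continuous SIR system with constants
`0 < b < c` (so `R₀ = b / c < 1`): the infected population tends to `0`
and the susceptible population tends to a strictly positive limit. -/
theorem sir_continuous_disease_free
    (b c : ℝ) (hb : 0 < b) (hbc : b < c)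
    (x₀ y₀ : ℝ) (hx₀ : 0 < x₀) (hy₀ : 0 < y₀)
    (κ : ℝ) (hκ : κ = y₀ / x₀)
    (x y : ℝ → ℝ)
    (hx : x = fun t => x₀ * Real.exp (-κ *
      ∫ s in (0:ℝ)..t, b / (Real.exp ((c - b) * s) + κ)))
    (hy : y = fun t => y₀ * Real.exp
      (∫ s in (0:ℝ)..t, (b / (1 + κ * Real.exp ((b - c) * s)) - c))) :
    Tendsto y atTop (nhds 0) ∧ ∃ α : ℝ, 0 < α ∧ Tendsto x atTop (nhds α) := by
  have hκ0 : 0 < κ := hκ ▸ div_pos hy₀ hx₀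
  set f : ℝ → ℝ := fun s => b / (Real.exp ((c - b) * s) + κ) with hf
  have hfc : Continuous f := by
    apply continuous_const.div (by continuity)
    intro s; positivity
  have hfint : ∀ a t : ℝ, IntervalIntegrable f MeasureTheory.volume a t :=
    fun a t => hfc.intervalIntegrable a t
  set I : ℝ → ℝ := fun t => ∫ s in (0:ℝ)..t, f s with hI
  have hImono : Monotone I := by
    intro t₁ t₂ h
    have h1 := intervalIntegral.integral_add_adjacent_intervals (hfint 0 t₁) (hfint t₁ t₂)
    have h2 : 0 ≤ ∫ s in t₁..t₂, f s := by
      apply intervalIntegral.integral_nonneg h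
      intro s _; positivity
    simp only [hI]; linarith
  have hgint : ∀ a t : ℝ, IntervalIntegrable (fun s => b * Real.exp ((b - c) * s))
      MeasureTheory.volume a t := fun a t => (by continuity : Continuous _).intervalIntegrable a t
  have hbc' : b - c < 0 := by linarith
  have hIbdd : ∀ t : ℝ, I t ≤ b / (c - b) := by
    intro t
    rcases le_or_gt t 0 with ht | ht
    · calc I t ≤ I 0 := hImono ht
        _ = 0 := by simp [hI]
        _ ≤ b / (c - b) := div_nonneg hb.le (by linarith)
    · have hle : I t ≤ ∫ s in (0:ℝ)..t, b * Real.exp ((b - c) * s) := by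
        apply intervalIntegral.integral_mono_on ht.le (hfint 0 t) (hgint 0 t)
        intro s _
        have he : Real.exp ((b - c) * s) = (Real.exp ((c - b) * s))⁻¹ := by
          rw [← Real.exp_neg]; ring_nf
        rw [he, ← div_eq_mul_inv]
        have h1 : (0:ℝ) < Real.exp ((c - b) * s) := Real.exp_pos _
        apply div_le_div_of_nonneg_left hb.le h1
        linarith [hκ0]
      have hcomp : (∫ s in (0:ℝ)..t, Real.exp ((b - c) * s))
          = (b - c)⁻¹ * (Real.exp ((b - c) * t) - 1) := by
        rw [intervalIntegral.integral_comp_mul_left (fun u => Real.exp u) (ne_of_lt hbc'),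
          integral_exp]
        simp [mul_comm]
      rw [intervalIntegral.integral_const_mul, hcomp] at hle
      have h2 : (0:ℝ) < Real.exp ((b - c) * t) := Real.exp_pos _
      calc I t ≤ b * ((b - c)⁻¹ * (Real.exp ((b - c) * t) - 1)) := hle
        _ ≤ b / (c - b) := by
          rw [div_eq_mul_inv]
          have : (b - c)⁻¹ < 0 := inv_lt_zero.mpr hbc'
          have h3 : (c - b)⁻¹ = -(b - c)⁻¹ := by
            rw [show c - b = -(b - c) by ring, inv_neg]
          rw [h3]
          have h4 := mul_neg_of_pos_of_neg (mul_pos hb h2) this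
          nlinarith
  have hIBdd : BddAbove (Set.range I) := ⟨b / (c - b), by rintro _ ⟨t, rfl⟩; exact hIbdd t⟩
  have hItend : Tendsto I atTop (nhds (⨆ t, I t)) := tendsto_atTop_ciSup hImono hIBdd
  constructor
  · -- y → 0
    have hgc : Continuous (fun s : ℝ => b / (1 + κ * Real.exp ((b - c) * s)) - c) := by
      apply Continuous.sub _ continuous_const
      apply continuous_const.div (by continuity)
      intro s; positivity
    have hkey : ∀ t : ℝ, 0 ≤ t →
        (∫ s in (0:ℝ)..t, (b / (1 + κ * Real.exp ((b - c) * s)) - c)) ≤ (b - c) * t := by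
      intro t ht
      have := intervalIntegral.integral_mono_on (μ := MeasureTheory.volume) ht
        (hgc.intervalIntegrable 0 t)
        (intervalIntegrable_const (c := b - c))
        (fun s _ => by
          have hd : (1:ℝ) ≤ 1 + κ * Real.exp ((b - c) * s) := by
            have := Real.exp_pos ((b - c) * s); nlinarith
          have : b / (1 + κ * Real.exp ((b - c) * s)) ≤ b := div_le_self hb.le hd
          linarith)
      simp only [intervalIntegral.integral_const, smul_eq_mul, sub_zero] at this
      nlinarith [this]
    apply squeeze_zero' (g := fun t => y₀ * Real.exp ((b - c) * t))
    · filter_upwards with t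
      rw [hy]; positivity
    · filter_upwards [eventually_ge_atTop (0:ℝ)] with t ht
      rw [hy]
      have := Real.exp_le_exp.mpr (hkey t ht)
      nlinarith [Real.exp_pos ((b - c) * t)]
    · have h1 : Tendsto (fun t : ℝ => (b - c) * t) atTop atBot :=
        (tendsto_const_mul_atBot_of_neg hbc').mpr tendsto_id
      have h2 : Tendsto (fun t : ℝ => Real.exp ((b - c) * t)) atTop (nhds 0) :=
        Real.tendsto_exp_atBot.comp h1
      simpa using h2.const_mul y₀
  · -- x → positive limit
    refine ⟨x₀ * Real.exp (-κ * ⨆ t, I t), by positivity, ?_⟩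
    rw [hx]
    exact tendsto_const_nhds.mul
      ((Real.continuous_exp.tendsto _).comp (hItend.const_mul (-κ)))
end

section
/- In the continuous SIR model, y(t) = κ·exp(∫₀ᵗ(b(τ)-c(τ))dτ)·x(t) for all t, where κ = y₀/x₀; i.e., the relation y = κ·e_{-f}·x between infected and susceptible populations holds with f = c - b. -/
open Real

/-- In the continuous SIR model, the infected and susceptible populations are
related by `y t = κ * exp (∫₀ᵗ (b - c)) * x t` with `κ = y 0 / x 0`. -/
theorem sir_continuous_infected_susceptible_relation
    (b c : ℝ → ℝ) (hb : Continuous b) (hc : Continuous c)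
    (x y : ℝ → ℝ)
    (hxpos : ∀ t, 0 < x t) (hypos : ∀ t, 0 < y t)
    (hx : ∀ t, HasDerivAt x (-(b t * x t * y t / (x t + y t))) t)
    (hy : ∀ t, HasDerivAt y (b t * x t * y t / (x t + y t) - c t * y t) t) :
    ∀ t, y t = (y 0 / x 0) *
      Real.exp (∫ τ in (0:ℝ)..t, (b τ - c τ)) * x t := by
  have hbc : Continuous (fun τ => b τ - c τ) := hb.sub hc
  set F : ℝ → ℝ := fun t => ∫ τ in (0:ℝ)..t, (b τ - c τ) with hF
  have hFderiv : ∀ t, HasDerivAt F (b t - c t) t := fun t =>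
    intervalIntegral.integral_hasDerivAt_right (hbc.intervalIntegrable 0 t)
      hbc.aestronglyMeasurable.stronglyMeasurableAtFilter hbc.continuousAt
  set h : ℝ → ℝ := fun t => y t / x t * Real.exp (-(F t)) with hh
  have hxne : ∀ t, x t ≠ 0 := fun t => (hxpos t).ne'
  have hxyne : ∀ t, x t + y t ≠ 0 := fun t => (add_pos (hxpos t) (hypos t)).ne'
  have hgderiv : ∀ t, HasDerivAt (fun t => y t / x t)
      ((b t - c t) * (y t / x t)) t := by
    intro t
    have key : ((b t * x t * y t / (x t + y t) - c t * y t) * x t -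
        y t * -(b t * x t * y t / (x t + y t))) / x t ^ 2
        = (b t - c t) * (y t / x t) := by
      field_simp [hxne t, hxyne t]
      ring
    exact key ▸ (hy t).div (hx t) (hxne t)
  have hderiv : ∀ t, HasDerivAt h 0 t := by
    intro t
    have he : HasDerivAt (fun t => Real.exp (-(F t)))
        (Real.exp (-(F t)) * (-(b t - c t))) t := by
      simpa using (((hFderiv t).neg).exp)
    have := (hgderiv t).fun_mul he
    refine this.congr_deriv ?_
    ring
  have hconst : ∀ t, h t = h 0 := by
    intro t
    have hd : Differentiable ℝ h := fun t => (hderiv t).differentiableAt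
    exact is_const_of_deriv_eq_zero hd (fun t => (hderiv t).deriv) t 0
  intro t
  have := hconst t
  have hF0 : F 0 = 0 := by simp [hF]
  simp only [hh, hF0, neg_zero, Real.exp_zero, mul_one] at this
  have hx0 := hxne 0
  have h2 : y t * Real.exp (-(F t)) = y 0 / x 0 * x t := by
    rw [div_mul_eq_mul_div, div_eq_iff (hxne t)] at this
    exact this
  have h3 : y t = y 0 / x 0 * x t * Real.exp (F t) := by
    rw [← h2]
    rw [mul_assoc, ← Real.exp_add]
    simp
  rw [h3, hF]
  ring
end
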